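/- arXiv:1307.0203 — 6 statements merged into one kernel-verified Lean document; each statement's English description precedes it below -/
import Mathlib

section
/- (Triangulated Schanuel's lemma) Let X →f M →g N → X[1] and X →f' M' →g' N' → X[1] be distinguished triangles in a triangulated category such that the induced maps Hom(M, M') → Hom(X, M') (composition with f) and Hom(M', M) → Hom(X, M) (composition with f') are surjective. Then M ⊕ N' ≅ M' ⊕ N. -/
/-!
The surjectivity hypotheses give `f' = f ≫ v` and `f = f' ≫ v'`, and then an elementary
(shear-and-swap) isomorphism `M ⊞ M' ≅ M' ⊞ M` carries `f ≫ inl` to `f' ≫ inl`.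
Adding the contractible triangle `0 → W → W → 0` to a distinguished triangle keeps it
distinguished, so `X → M ⊞ M' → N ⊞ M'` and `X → M' ⊞ M → N' ⊞ M` are distinguished; an
isomorphism on the first two vertices of distinguished triangles extends to the third, giving
`N ⊞ M' ≅ N' ⊞ M`.
-/

open CategoryTheory Limits Pretriangulated ZeroObject

universe v u

noncomputable section

namespace CategoryTheory

lemma exists_iso_biprod_comm_of_factors {C : Type u} [Category.{v} C] [Preadditive C]
    [HasBinaryBiproducts C] {X M M' : C} {f : X ⟶ M} {f' : X ⟶ M'}
    {v : M ⟶ M'} {v' : M' ⟶ M} (hv : f ≫ v = f') (hv' : f' ≫ v' = f) :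
    ∃ e : M ⊞ M' ≅ M' ⊞ M, f ≫ biprod.inl ≫ e.hom = f' ≫ biprod.inl := by
  refine ⟨Biprod.unipotentUpper v ≪≫ Biprod.unipotentLower (-v') ≪≫ biprod.braiding M M', ?_⟩
  ext <;> simp [Biprod.ofComponents, reassoc_of% hv, hv']

namespace Pretriangulated

-- Inside `Triangle.*` declarations the unqualified `shiftFunctor` means `Triangle.shiftFunctor`.
variable {C : Type u} [Category.{v} C] [Preadditive C] [HasZeroObject C] [HasShift C ℤ]
  [∀ n : ℤ, (CategoryTheory.shiftFunctor C n).Additive]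

-- Reducible structure literals rather than `Triangle.mk`: their vertices must unfold reducibly
-- for `simp` and `cat_disch` to check the commutativity conditions of the bicone below.
abbrev contractibleTriangle₁ (W : C) : Triangle C := ⟨0, W, W, 0, 𝟙 W, 0⟩

section Biprod

variable [HasBinaryBiproducts C]

abbrev Triangle.biprodContractible₁ (T : Triangle C) (W : C) : Triangle C :=
  ⟨T.obj₁, T.obj₂ ⊞ W, T.obj₃ ⊞ W, T.mor₁ ≫ biprod.inl, biprod.map T.mor₂ (𝟙 W),
    biprod.fst ≫ T.mor₃⟩

def Triangle.biprodContractible₁Bicone (T : Triangle C) (W : C) :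
    BinaryBicone T (contractibleTriangle₁ W) where
  pt := T.biprodContractible₁ W
  fst := Triangle.homMk _ _ (𝟙 _) biprod.fst biprod.fst
  snd := Triangle.homMk _ _ 0 biprod.snd biprod.snd
  inl := Triangle.homMk _ _ (𝟙 _) biprod.inl biprod.inl
  inr := Triangle.homMk _ _ 0 biprod.inr biprod.inr

def Triangle.isBilimitBiprodContractible₁Bicone (T : Triangle C) (W : C) :
    (T.biprodContractible₁Bicone W).IsBilimit :=
  isBinaryBilimitOfTotal _ <| by
    ext
    · change 𝟙 T.obj₁ ≫ 𝟙 T.obj₁ + (0 : T.obj₁ ⟶ 0) ≫ (0 : 0 ⟶ T.obj₁) = 𝟙 T.obj₁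
      simp
    · exact biprod.total
    · exact biprod.total

end Biprod

variable [Pretriangulated C]

lemma _root_.CategoryTheory.Limits.BinaryBicone.IsBilimit.pt_distinguished
    {T₁ T₂ : Triangle C} {b : BinaryBicone T₁ T₂} (hb : b.IsBilimit)
    (h₁ : T₁ ∈ distTriang C) (h₂ : T₂ ∈ distTriang C) : b.pt ∈ distTriang C :=
  isomorphic_distinguished _
    (productTriangle_distinguished (pairFunction T₁ T₂) (by rintro (_ | _) <;> assumption)) _
    (hb.isLimit.conePointUniqueUpToIso (productTriangle.isLimitFan _))

lemma Triangle.biprodContractible₁_distinguished [HasBinaryBiproducts C] {T : Triangle C}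
    (hT : T ∈ distTriang C) (W : C) : T.biprodContractible₁ W ∈ distTriang C :=
  (Triangle.isBilimitBiprodContractible₁Bicone T W).pt_distinguished hT
    (contractible_distinguished₁ W)

end Pretriangulated

end CategoryTheory

end

/-- triangulated Schanuel's lemma: given distinguished triangles
`X →f M →g N → X⟦1⟧` and `X →f' M' →g' N' → X⟦1⟧` such that precomposition with `f`
gives a surjection `Hom(M, M') → Hom(X, M')` and precomposition with `f'` gives a
surjection `Hom(M', M) → Hom(X, M)`, one has `M ⊞ N' ≅ M' ⊞ N`. -/
theorem stmt1 {C : Type u} [Category.{v} C] [Preadditive C] [HasZeroObject C]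
    [HasShift C ℤ] [∀ n : ℤ, (shiftFunctor C n).Additive] [Pretriangulated C]
    [HasBinaryBiproducts C]
    (X M N M' N' : C)
    (f : X ⟶ M) (g : M ⟶ N) (h : N ⟶ X⟦(1 : ℤ)⟧)
    (f' : X ⟶ M') (g' : M' ⟶ N') (h' : N' ⟶ X⟦(1 : ℤ)⟧)
    (hT : Triangle.mk f g h ∈ distTriang C)
    (hT' : Triangle.mk f' g' h' ∈ distTriang C)
    (hsurj : ∀ u : X ⟶ M', ∃ v : M ⟶ M', f ≫ v = u)
    (hsurj' : ∀ u : X ⟶ M, ∃ v : M' ⟶ M, f' ≫ v = u) :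
    Nonempty (M ⊞ N' ≅ M' ⊞ N) := by
  obtain ⟨v, hv⟩ := hsurj f'
  obtain ⟨v', hv'⟩ := hsurj' f
  obtain ⟨e, he⟩ := exists_iso_biprod_comm_of_factors hv hv'
  let φ := isoTriangleOfIso₁₂ _ _ (Triangle.biprodContractible₁_distinguished hT M')
    (Triangle.biprodContractible₁_distinguished hT' M) (Iso.refl X) e
    ((Category.assoc _ _ _).trans (he.trans (Category.id_comp _).symm))
  exact ⟨biprod.braiding M N' ≪≫ (Triangle.π₃.mapIso φ).symm ≪≫ biprod.braiding N M'⟩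
end

section
/- Let M be a semi-selforthogonal object in a triangulated category and let X be the class of objects X ∈ M^{⊥_{k>0}} admitting triangles X_{i+1} → M_i → X_i → (i ≥ 0, X_0 = X) with all M_i ∈ add(M) and all X_i ∈ M^{⊥_{k>0}}. Then X is closed under direct summands: if V = U ⊕ W belongs to X, then both U and W belong to X. -/
/-!
Let `Y` be a direct summand of `V ∈ X`, and let `X₁ → M₀ → V →` be the first triangle of `V`.
Completing the composite `M₀ → V → Y` to a triangle `Y' → M₀ → Y →` and comparing it with the
first one in both directions (possible because `Hom(M₀, X₁[1]) = 0`) shows that `Y'` is a direct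
summand of `X₁ ⊕ M₀`, which lies in `X` again. Iterating this step builds the required triangles
for `Y`; every object met along the way is a summand of an object of `X`, hence in `M^{⊥_{k>0}}`.
-/

open CategoryTheory Limits Pretriangulated

universe v u

variable {C : Type u} [Category.{v} C] [Preadditive C] [HasZeroObject C]
  [HasShift C ℤ] [∀ n : ℤ, (shiftFunctor C n).Additive] [Pretriangulated C]
  [HasFiniteBiproducts C]

/-- `X ∈ add M`: `X` is a direct summand of a finite direct sum of copies of `M`. -/
def inAdd (M X : C) : Prop :=
  ∃ (n : ℕ) (s : X ⟶ ⨁ (fun _ : Fin n => M)) (p : (⨁ (fun _ : Fin n => M)) ⟶ X),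
    s ≫ p = 𝟙 X

/-- `M^{⊥_{k>0}}`. -/
def rightPerp (M : C) : Set C :=
  {N : C | ∀ k : ℤ, 0 < k → ∀ f : M ⟶ N⟦k⟧, f = 0}

/-- The class `X` of objects `X ∈ M^{⊥_{k>0}}` admitting triangles
`X_{i+1} → M_i → X_i →` (`X_0 = X`) with all `M_i ∈ add M` and all `X_i ∈ M^{⊥_{k>0}}`. -/
def auslanderClass (M : C) : Set C :=
  {X : C | ∃ Xs : ℕ → C, Xs 0 = X ∧ ∀ i : ℕ, Xs i ∈ rightPerp M ∧
    ∃ (Mi : C) (_ : inAdd M Mi) (u : Xs (i + 1) ⟶ Mi) (v : Mi ⟶ Xs i)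
      (w : Xs i ⟶ (Xs (i + 1))⟦(1 : ℤ)⟧), Triangle.mk u v w ∈ distTriang C}

open ZeroObject

lemma exists_seq_of_forall_exists {α : Type*} {P : α → Prop} {R : α → α → Prop}
    (h : ∀ a, P a → ∃ b, P b ∧ R a b) {a₀ : α} (h₀ : P a₀) :
    ∃ f : ℕ → α, f 0 = a₀ ∧ ∀ n, R (f n) (f (n + 1)) := by
  choose next hnext_mem hnext_rel using h
  let step : Subtype P → Subtype P := fun x => ⟨next x.1 x.2, hnext_mem x.1 x.2⟩
  refine ⟨fun n => (step^[n] ⟨a₀, h₀⟩).1, rfl, fun n => ?_⟩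
  simp only [Function.iterate_succ_apply']
  exact hnext_rel _ _

section Additive

variable {D : Type*} [Category D]

noncomputable def CategoryTheory.Retract.biprodMap [HasZeroMorphisms D] [HasBinaryBiproducts D]
    {A A' B B' : D} (h₁ : Retract A A') (h₂ : Retract B B') : Retract (A ⊞ B) (A' ⊞ B') where
  i := biprod.map h₁.i h₂.i
  r := biprod.map h₁.r h₂.r

noncomputable def biprodBiproductFinRetract [HasZeroMorphisms D] [HasFiniteBiproducts D]
    [HasBinaryBiproducts D] (M : D) (n m : ℕ) :
    Retract ((⨁ fun _ : Fin n => M) ⊞ (⨁ fun _ : Fin m => M)) (⨁ fun _ : Fin (n + m) => M) where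
  i := biprod.desc (biproduct.desc fun j => biproduct.ι (fun _ => M) (Fin.castAdd m j))
    (biproduct.desc fun j => biproduct.ι (fun _ => M) (Fin.natAdd n j))
  r := biprod.lift (biproduct.lift fun j => biproduct.π (fun _ => M) (Fin.castAdd m j))
    (biproduct.lift fun j => biproduct.π (fun _ => M) (Fin.natAdd n j))
  retract := by
    ext j j' <;> simp [biproduct.ι_π, Fin.ext_iff] <;> omega

noncomputable def biprodIsoPiBool [HasZeroMorphisms D] (F : Bool → D) [HasProduct F]
    [HasBinaryBiproduct (F true) (F false)] : F true ⊞ F false ≅ ∏ᶜ F where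
  hom := Pi.lift fun b => Bool.rec biprod.snd biprod.fst b
  inv := biprod.lift (Pi.π F true) (Pi.π F false)
  inv_hom_id := Pi.hom_ext _ _ fun b => by cases b <;> simp

variable [Preadditive D] [HasFiniteBiproducts D]

lemma inAdd_iff_nonempty_retract {M N : D} :
    inAdd M N ↔ ∃ n : ℕ, Nonempty (Retract N (⨁ fun _ : Fin n => M)) :=
  ⟨fun ⟨n, s, p, h⟩ => ⟨n, ⟨⟨s, p, h⟩⟩⟩, fun ⟨n, ⟨h⟩⟩ => ⟨n, h.i, h.r, h.retract⟩⟩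

lemma inAdd_biprod [HasBinaryBiproducts D] {M N₁ N₂ : D} (h₁ : inAdd M N₁) (h₂ : inAdd M N₂) :
    inAdd M (N₁ ⊞ N₂) := by
  obtain ⟨n, ⟨r₁⟩⟩ := inAdd_iff_nonempty_retract.1 h₁
  obtain ⟨m, ⟨r₂⟩⟩ := inAdd_iff_nonempty_retract.1 h₂
  exact inAdd_iff_nonempty_retract.2
    ⟨n + m, ⟨(r₁.biprodMap r₂).trans (biprodBiproductFinRetract M n m)⟩⟩

lemma inAdd_zero [HasZeroObject D] (M : D) : inAdd M 0 :=
  ⟨0, 0, 0, (isZero_zero D).eq_of_src _ _⟩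

end Additive

section RightPerp

variable {D : Type*} [Category D] [Preadditive D] [HasShift D ℤ] {M : D}

lemma mem_rightPerp_of_retract {U V : D} (h : Retract U V) (hV : V ∈ rightPerp M) :
    U ∈ rightPerp M := by
  intro k hk f
  have h' := h.map (shiftFunctor D k)
  rw [← Category.comp_id f, ← h'.retract, ← Category.assoc, hV k hk (f ≫ h'.i), zero_comp]

lemma eq_zero_of_inAdd_of_mem_rightPerp [HasFiniteBiproducts D] {N Z : D} (hN : inAdd M N)
    (hZ : Z ∈ rightPerp M) {k : ℤ} (hk : 0 < k) (f : N ⟶ Z⟦k⟧) : f = 0 := by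
  obtain ⟨n, ⟨h⟩⟩ := inAdd_iff_nonempty_retract.1 hN
  have hrf : h.r ≫ f = 0 := biproduct.hom_ext' _ _ fun j => by
    rw [comp_zero, ← Category.assoc]
    exact hZ k hk _
  rw [← Category.id_comp f, ← h.retract, Category.assoc, hrf, comp_zero]

variable [∀ n : ℤ, (shiftFunctor D n).Additive]

lemma biprod_mem_rightPerp [HasBinaryBiproducts D] {A B : D} (hA : A ∈ rightPerp M)
    (hB : B ∈ rightPerp M) : (A ⊞ B) ∈ rightPerp M := by
  intro k hk f
  have hfst := hA k hk (f ≫ biprod.fst⟦k⟧')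
  have hsnd := hB k hk (f ≫ biprod.snd⟦k⟧')
  calc f = f ≫ (biprod.fst ≫ biprod.inl + biprod.snd ≫ biprod.inr)⟦k⟧' := by simp
    _ = 0 := by
      simp only [Functor.map_add, Functor.map_comp, Preadditive.comp_add, reassoc_of% hfst,
        reassoc_of% hsnd, zero_comp, add_zero]

lemma biproduct_mem_rightPerp {ι : Type} [Fintype ι] (F : ι → D) [HasBiproduct F]
    (hF : ∀ i, F i ∈ rightPerp M) : (⨁ F) ∈ rightPerp M := by
  intro k hk f
  calc f = f ≫ (∑ i, biproduct.π F i ≫ biproduct.ι F i)⟦k⟧' := by simp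
    _ = 0 := by
      rw [Functor.map_sum, Preadditive.comp_sum]
      refine Finset.sum_eq_zero fun i _ => ?_
      rw [Functor.map_comp, ← Category.assoc, hF i k hk (f ≫ _), zero_comp]

lemma mem_rightPerp_of_inAdd [HasFiniteBiproducts D] (hM : M ∈ rightPerp M) {N : D}
    (hN : inAdd M N) : N ∈ rightPerp M := by
  obtain ⟨n, ⟨h⟩⟩ := inAdd_iff_nonempty_retract.1 hN
  exact mem_rightPerp_of_retract h (biproduct_mem_rightPerp _ fun _ => hM)

end RightPerp

section Triangulated

variable {D : Type*} [Category D] [Preadditive D] [HasZeroObject D] [HasShift D ℤ]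
  [∀ n : ℤ, (shiftFunctor D n).Additive] [Pretriangulated D]

lemma yoneda_exact₁_of_distTriang (T : Triangle D) (hT : T ∈ distTriang D) {X : D}
    (f : T.obj₁ ⟶ X) (hf : T.mor₃ ≫ f⟦(1 : ℤ)⟧' = 0) : ∃ g : T.obj₂ ⟶ X, f = T.mor₁ ≫ g := by
  obtain ⟨g, hg⟩ : ∃ g : T.obj₂⟦(1 : ℤ)⟧ ⟶ X⟦(1 : ℤ)⟧, f⟦(1 : ℤ)⟧' = (-T.mor₁⟦(1 : ℤ)⟧') ≫ g :=
    Triangle.yoneda_exact₃ _ (rot_of_distTriang _ hT) _ hf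
  refine ⟨(shiftFunctor D (1 : ℤ)).preimage (-g), (shiftFunctor D (1 : ℤ)).map_injective ?_⟩
  rw [hg, Functor.map_comp, Functor.map_preimage, Preadditive.neg_comp, Preadditive.comp_neg]

lemma exists_distTriang_of_iso {T : Triangle D} (hT : T ∈ distTriang D) {A B Z : D}
    (e₁ : A ≅ T.obj₁) (e₂ : B ≅ T.obj₂) (e₃ : Z ≅ T.obj₃) :
    ∃ (u : A ⟶ B) (v : B ⟶ Z) (w : Z ⟶ A⟦(1 : ℤ)⟧), Triangle.mk u v w ∈ distTriang D := by
  refine ⟨e₁.hom ≫ T.mor₁ ≫ e₂.inv, e₂.hom ≫ T.mor₂ ≫ e₃.inv, e₃.hom ≫ T.mor₃ ≫ e₁.inv⟦(1 : ℤ)⟧',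
    isomorphic_distinguished _ hT _ (Triangle.isoMk _ _ e₁ e₂ e₃ ?_ ?_ ?_)⟩
  all_goals dsimp only [Triangle.mk]
  all_goals simp [← Functor.map_comp]

lemma exists_distTriang_biprod {A₁ B₁ Z₁ A₂ B₂ Z₂ : D}
    {u₁ : A₁ ⟶ B₁} {v₁ : B₁ ⟶ Z₁} {w₁ : Z₁ ⟶ A₁⟦(1 : ℤ)⟧}
    {u₂ : A₂ ⟶ B₂} {v₂ : B₂ ⟶ Z₂} {w₂ : Z₂ ⟶ A₂⟦(1 : ℤ)⟧}
    (h₁ : Triangle.mk u₁ v₁ w₁ ∈ distTriang D) (h₂ : Triangle.mk u₂ v₂ w₂ ∈ distTriang D) :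
    ∃ (u : A₁ ⊞ A₂ ⟶ B₁ ⊞ B₂) (v : B₁ ⊞ B₂ ⟶ Z₁ ⊞ Z₂) (w : Z₁ ⊞ Z₂ ⟶ (A₁ ⊞ A₂)⟦(1 : ℤ)⟧),
      Triangle.mk u v w ∈ distTriang D := by
  let T : Bool → Triangle D := fun b => cond b (Triangle.mk u₁ v₁ w₁) (Triangle.mk u₂ v₂ w₂)
  exact exists_distTriang_of_iso (productTriangle_distinguished T (Bool.rec h₂ h₁))
    (biprodIsoPiBool fun b => (T b).obj₁) (biprodIsoPiBool fun b => (T b).obj₂)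
    (biprodIsoPiBool fun b => (T b).obj₃)

lemma nonempty_retract_biprod_of_distTriang {X₁ M₀ V Y Y' : D}
    {u : X₁ ⟶ M₀} {v : M₀ ⟶ V} {w : V ⟶ X₁⟦(1 : ℤ)⟧} (hT : Triangle.mk u v w ∈ distTriang D)
    (h : Retract Y V) {a : Y' ⟶ M₀} {c : Y ⟶ Y'⟦(1 : ℤ)⟧}
    (hT' : Triangle.mk a (v ≫ h.r) c ∈ distTriang D) (hvw : v ≫ h.r ≫ h.i ≫ w = 0) :
    Nonempty (Retract Y' (X₁ ⊞ M₀)) := by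
  obtain ⟨φ, -, hφ⟩ : ∃ φ : X₁ ⟶ Y', u ≫ 𝟙 M₀ = φ ≫ a ∧ w ≫ φ⟦(1 : ℤ)⟧' = h.r ≫ c :=
    complete_distinguished_triangle_morphism₁ _ _ hT hT' (𝟙 M₀) h.r (Category.id_comp _).symm
  obtain ⟨g, hg⟩ : ∃ g : M₀ ⟶ M₀, (v ≫ h.r) ≫ h.i = g ≫ v :=
    Triangle.coyoneda_exact₃ _ hT _
      ((Category.assoc _ _ _).trans ((Category.assoc _ _ _).trans hvw))
  obtain ⟨ψ, -, hψ⟩ : ∃ ψ : Y' ⟶ X₁, a ≫ g = ψ ≫ u ∧ c ≫ ψ⟦(1 : ℤ)⟧' = h.i ≫ w :=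
    complete_distinguished_triangle_morphism₁ _ _ hT' hT g h.i hg
  have hc : c ≫ (𝟙 Y' - ψ ≫ φ)⟦(1 : ℤ)⟧' = 0 := by
    rw [Functor.map_sub, CategoryTheory.Functor.map_id, Functor.map_comp, Preadditive.comp_sub,
      reassoc_of% hψ, hφ, h.retract_assoc, Category.comp_id, sub_self]
  obtain ⟨t, ht⟩ : ∃ t : M₀ ⟶ Y', 𝟙 Y' - ψ ≫ φ = a ≫ t :=
    yoneda_exact₁_of_distTriang _ hT' _ hc
  exact ⟨⟨biprod.lift ψ a, biprod.desc φ t, by simp [← ht]⟩⟩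

end Triangulated

def IsResolutionStep (M Y Y' : C) : Prop :=
  Y ∈ rightPerp M ∧ ∃ (N : C) (_ : inAdd M N) (u : Y' ⟶ N) (v : N ⟶ Y)
    (w : Y ⟶ Y'⟦(1 : ℤ)⟧), Triangle.mk u v w ∈ distTriang C

section AuslanderClass

variable {M : C}

lemma mem_auslanderClass_iff {X : C} : X ∈ auslanderClass M ↔
    ∃ Xs : ℕ → C, Xs 0 = X ∧ ∀ i, IsResolutionStep M (Xs i) (Xs (i + 1)) :=
  Iff.rfl

lemma exists_isResolutionStep_of_mem_auslanderClass {X : C} (hX : X ∈ auslanderClass M) :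
    ∃ X', X' ∈ auslanderClass M ∧ IsResolutionStep M X X' := by
  obtain ⟨Xs, rfl, hXs⟩ := mem_auslanderClass_iff.1 hX
  exact ⟨Xs 1, mem_auslanderClass_iff.2 ⟨fun i => Xs (i + 1), rfl, fun i => hXs (i + 1)⟩, hXs 0⟩

lemma mem_rightPerp_of_mem_auslanderClass {X : C} (hX : X ∈ auslanderClass M) :
    X ∈ rightPerp M := by
  obtain ⟨_, _, hX, _⟩ := exists_isResolutionStep_of_mem_auslanderClass hX
  exact hX

lemma isResolutionStep_zero_of_inAdd (hM : M ∈ rightPerp M) {N : C} (hN : inAdd M N) :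
    IsResolutionStep M N 0 :=
  ⟨mem_rightPerp_of_inAdd hM hN, N, hN, 0, 𝟙 N, 0, contractible_distinguished₁ N⟩

lemma mem_auslanderClass_of_inAdd (hM : M ∈ rightPerp M) {N : C} (hN : inAdd M N) :
    N ∈ auslanderClass M := by
  refine mem_auslanderClass_iff.2 ⟨fun | 0 => N | _ + 1 => 0, rfl, ?_⟩
  rintro (_ | _)
  · exact isResolutionStep_zero_of_inAdd hM hN
  · exact isResolutionStep_zero_of_inAdd hM (inAdd_zero M)

lemma IsResolutionStep.biprod {A A' B B' : C} (hA : IsResolutionStep M A A')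
    (hB : IsResolutionStep M B B') : IsResolutionStep M (A ⊞ B) (A' ⊞ B') := by
  obtain ⟨hA, N₁, hN₁, u₁, v₁, w₁, h₁⟩ := hA
  obtain ⟨hB, N₂, hN₂, u₂, v₂, w₂, h₂⟩ := hB
  obtain ⟨u, v, w, h⟩ := exists_distTriang_biprod h₁ h₂
  exact ⟨biprod_mem_rightPerp hA hB, N₁ ⊞ N₂, inAdd_biprod hN₁ hN₂, u, v, w, h⟩

lemma biprod_mem_auslanderClass {A B : C} (hA : A ∈ auslanderClass M)
    (hB : B ∈ auslanderClass M) : (A ⊞ B) ∈ auslanderClass M := by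
  obtain ⟨Xs, rfl, hXs⟩ := mem_auslanderClass_iff.1 hA
  obtain ⟨Ys, rfl, hYs⟩ := mem_auslanderClass_iff.1 hB
  exact mem_auslanderClass_iff.2 ⟨fun i => Xs i ⊞ Ys i, rfl, fun i => (hXs i).biprod (hYs i)⟩

lemma exists_isResolutionStep_of_retract (hM : M ∈ rightPerp M) {Y V : C} (h : Retract Y V)
    (hV : V ∈ auslanderClass M) :
    ∃ Y', (∃ V' ∈ auslanderClass M, Nonempty (Retract Y' V')) ∧ IsResolutionStep M Y Y' := by
  obtain ⟨X₁, hX₁, hV₀, M₀, hM₀, u, v, w, hT⟩ :=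
    exists_isResolutionStep_of_mem_auslanderClass hV
  obtain ⟨Y', a, c, hT'⟩ := distinguished_cocone_triangle₁ (v ≫ h.r)
  have hvw : v ≫ h.r ≫ h.i ≫ w = 0 := eq_zero_of_inAdd_of_mem_rightPerp hM₀
    (mem_rightPerp_of_mem_auslanderClass hX₁) one_pos _
  exact ⟨Y', ⟨X₁ ⊞ M₀, biprod_mem_auslanderClass hX₁ (mem_auslanderClass_of_inAdd hM hM₀),
      nonempty_retract_biprod_of_distTriang hT h hT' hvw⟩,
    mem_rightPerp_of_retract h hV₀, M₀, hM₀, a, v ≫ h.r, c, hT'⟩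

lemma mem_auslanderClass_of_retract (hM : M ∈ rightPerp M) {U V : C} (h : Retract U V)
    (hV : V ∈ auslanderClass M) : U ∈ auslanderClass M :=
  exists_seq_of_forall_exists (P := fun Y => ∃ V ∈ auslanderClass M, Nonempty (Retract Y V))
    (fun _ ⟨_, hV, ⟨h⟩⟩ => exists_isResolutionStep_of_retract hM h hV) ⟨V, hV, ⟨h⟩⟩

end AuslanderClass

/-- if `M` is semi-selforthogonal, the class `X = auslanderClass M` is
closed under direct summands: if `V ≅ U ⊞ W` belongs to `X` then so do `U` and `W`. -/
theorem stmt5 (M : C)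
    (hM : ∀ k : ℤ, 0 < k → ∀ f : M ⟶ M⟦k⟧, f = 0)
    (U V W : C) (e : V ≅ U ⊞ W) (hV : V ∈ auslanderClass M) :
    U ∈ auslanderClass M ∧ W ∈ auslanderClass M :=
  ⟨mem_auslanderClass_of_retract hM ((Retract.mk biprod.inl biprod.fst).trans (.ofIso e.symm)) hV,
    mem_auslanderClass_of_retract hM ((Retract.mk biprod.inr biprod.snd).trans (.ofIso e.symm)) hV⟩
end

section
/- Let C be a full subcategory of a triangulated category that is resolving (closed under extensions and under [-1]) and closed under direct summands. Then the subcategory ⟨C⟩_+ := { X | X ≅ C[n] for some C ∈ C and some integer n ≥ 0 } is a triangulated subcategory (closed under [1], [-1], and extensions) closed under direct summands. -/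
/-!
An object `X` lies in `⟨S⟩₊` exactly when `X⟦-n⟧ ∈ S` for some `n ≥ 0`, and since `S` is closed
under `⟦-1⟧` this then holds for every larger `n` as well. Hence finitely many objects of `⟨S⟩₊`
are moved into `S` by one common shift `⟦-N⟧`. Shifts preserve distinguished triangles and
retractions, so the closure properties of `S` apply there, and shifting back by `⟦N⟧` lands in
`⟨S⟩₊`.
-/

open CategoryTheory Limits Pretriangulated

universe v u

variable {C : Type u} [Category.{v} C] [Preadditive C] [HasZeroObject C]
  [HasShift C ℤ] [∀ n : ℤ, (shiftFunctor C n).Additive] [Pretriangulated C]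

/-- `⟨S⟩₊`: objects isomorphic to `Y⟦n⟧` for some `Y ∈ S` and some integer `n ≥ 0`. -/
def plusClosure (S : Set C) : Set C :=
  {X : C | ∃ Y ∈ S, ∃ n : ℕ, Nonempty (X ≅ Y⟦(n : ℤ)⟧)}

section Shift

variable {D : Type*} [Category D] [HasShift D ℤ] {S : Set D}

lemma mem_plusClosure_iff (hiso : ∀ (X Y : D), (X ≅ Y) → X ∈ S → Y ∈ S) {X : D} :
    X ∈ plusClosure S ↔ ∃ n : ℕ, X⟦-(n : ℤ)⟧ ∈ S := by
  constructor
  · rintro ⟨Y, hY, n, ⟨e⟩⟩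
    exact ⟨n, hiso _ _ ((shiftShiftNeg Y (n : ℤ)).symm ≪≫ (shiftFunctor D _).mapIso e.symm) hY⟩
  · rintro ⟨n, hn⟩
    exact ⟨_, hn, n, ⟨(shiftNegShift X (n : ℤ)).symm⟩⟩

lemma shift_neg_mem_of_le (hiso : ∀ (X Y : D), (X ≅ Y) → X ∈ S → Y ∈ S)
    (hshift : ∀ X : D, X ∈ S → X⟦(-1 : ℤ)⟧ ∈ S) {X : D} {n m : ℕ} (hnm : n ≤ m)
    (hn : X⟦-(n : ℤ)⟧ ∈ S) : X⟦-(m : ℤ)⟧ ∈ S := by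
  induction m, hnm using Nat.le_induction with
  | base => exact hn
  | succ k _ hk =>
    exact hiso _ _ ((shiftFunctorAdd' D (-(k : ℤ)) (-1) _ (by push_cast; ring)).app X).symm
      (hshift _ hk)

lemma shift_one_mem_plusClosure (hiso : ∀ (X Y : D), (X ≅ Y) → X ∈ S → Y ∈ S) {X : D}
    (hX : X ∈ plusClosure S) : X⟦(1 : ℤ)⟧ ∈ plusClosure S := by
  obtain ⟨n, hn⟩ := (mem_plusClosure_iff hiso).1 hX
  refine (mem_plusClosure_iff hiso).2 ⟨n + 1, hiso _ _ ?_ hn⟩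
  exact (shiftFunctorAdd' D 1 (-((n + 1 : ℕ) : ℤ)) (-(n : ℤ)) (by push_cast; ring)).app X

lemma shift_neg_one_mem_plusClosure (hiso : ∀ (X Y : D), (X ≅ Y) → X ∈ S → Y ∈ S)
    (hshift : ∀ X : D, X ∈ S → X⟦(-1 : ℤ)⟧ ∈ S) {X : D}
    (hX : X ∈ plusClosure S) : X⟦(-1 : ℤ)⟧ ∈ plusClosure S := by
  obtain ⟨n, hn⟩ := (mem_plusClosure_iff hiso).1 hX
  exact (mem_plusClosure_iff hiso).2
    ⟨n, hiso _ _ ((shiftFunctorComm D (-(n : ℤ)) (-1)).app X) (hshift _ hn)⟩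

lemma mem_plusClosure_of_retract (hiso : ∀ (X Y : D), (X ≅ Y) → X ∈ S → Y ∈ S)
    (hsum : ∀ (U V : D) (r : U ⟶ V) (s : V ⟶ U), s ≫ r = 𝟙 V → U ∈ S → V ∈ S)
    {U V : D} (r : U ⟶ V) (s : V ⟶ U) (hrs : s ≫ r = 𝟙 V) (hU : U ∈ plusClosure S) :
    V ∈ plusClosure S := by
  obtain ⟨n, hn⟩ := (mem_plusClosure_iff hiso).1 hU
  refine (mem_plusClosure_iff hiso).2 ⟨n, hsum _ _ (r⟦_⟧') (s⟦_⟧') ?_ hn⟩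
  rw [← Functor.map_comp, hrs, CategoryTheory.Functor.map_id]

end Shift

lemma obj₂_mem_plusClosure {S : Set C} (hiso : ∀ (X Y : C), (X ≅ Y) → X ∈ S → Y ∈ S)
    (hshift : ∀ X : C, X ∈ S → X⟦(-1 : ℤ)⟧ ∈ S)
    (hext : ∀ T ∈ distTriang C, T.obj₁ ∈ S → T.obj₃ ∈ S → T.obj₂ ∈ S)
    {T : Triangle C} (hT : T ∈ distTriang C) (h₁ : T.obj₁ ∈ plusClosure S)
    (h₃ : T.obj₃ ∈ plusClosure S) : T.obj₂ ∈ plusClosure S := by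
  obtain ⟨n₁, hn₁⟩ := (mem_plusClosure_iff hiso).1 h₁
  obtain ⟨n₃, hn₃⟩ := (mem_plusClosure_iff hiso).1 h₃
  refine (mem_plusClosure_iff hiso).2 ⟨max n₁ n₃, ?_⟩
  exact hext _ (Triangle.shift_distinguished T hT _)
    (shift_neg_mem_of_le hiso hshift (le_max_left _ _) hn₁)
    (shift_neg_mem_of_le hiso hshift (le_max_right _ _) hn₃)

theorem stmt6_general (S : Set C)
    (hiso : ∀ (X Y : C), (X ≅ Y) → X ∈ S → Y ∈ S)
    (hext : ∀ T ∈ distTriang C, T.obj₁ ∈ S → T.obj₃ ∈ S → T.obj₂ ∈ S)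
    (hshift : ∀ X : C, X ∈ S → X⟦(-1 : ℤ)⟧ ∈ S)
    (hsum : ∀ (U V : C) (r : U ⟶ V) (s : V ⟶ U), s ≫ r = 𝟙 V → U ∈ S → V ∈ S) :
    (∀ X ∈ plusClosure S, X⟦(1 : ℤ)⟧ ∈ plusClosure S) ∧
    (∀ X ∈ plusClosure S, X⟦(-1 : ℤ)⟧ ∈ plusClosure S) ∧
    (∀ T ∈ distTriang C,
      T.obj₁ ∈ plusClosure S → T.obj₃ ∈ plusClosure S → T.obj₂ ∈ plusClosure S) ∧
    (∀ (U V : C) (r : U ⟶ V) (s : V ⟶ U), s ≫ r = 𝟙 V →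
      U ∈ plusClosure S → V ∈ plusClosure S) :=
  ⟨fun _ => shift_one_mem_plusClosure hiso,
    fun _ => shift_neg_one_mem_plusClosure hiso hshift,
    fun _ hT => obj₂_mem_plusClosure hiso hshift hext hT,
    fun _ _ r s hrs => mem_plusClosure_of_retract hiso hsum r s hrs⟩

/-- if `S` is resolving (extension closed and closed under `⟦-1⟧`),
contains the zero objects, is closed under isomorphisms and under direct summands,
then `⟨S⟩₊` is a triangulated subcategory (closed under `⟦1⟧`, `⟦-1⟧` and extensions)
closed under direct summands. -/
theorem stmt6 (S : Set C)
    (hiso : ∀ (X Y : C), (X ≅ Y) → X ∈ S → Y ∈ S)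
    (hzero : ∀ X : C, IsZero X → X ∈ S)
    (hext : ∀ T ∈ distTriang C, T.obj₁ ∈ S → T.obj₃ ∈ S → T.obj₂ ∈ S)
    (hshift : ∀ X : C, X ∈ S → X⟦(-1 : ℤ)⟧ ∈ S)
    (hsum : ∀ (U V : C) (r : U ⟶ V) (s : V ⟶ U), s ≫ r = 𝟙 V → U ∈ S → V ∈ S) :
    (∀ X ∈ plusClosure S, X⟦(1 : ℤ)⟧ ∈ plusClosure S) ∧
    (∀ X ∈ plusClosure S, X⟦(-1 : ℤ)⟧ ∈ plusClosure S) ∧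
    (∀ T ∈ distTriang C,
      T.obj₁ ∈ plusClosure S → T.obj₃ ∈ plusClosure S → T.obj₂ ∈ plusClosure S) ∧
    (∀ (U V : C) (r : U ⟶ V) (s : V ⟶ U), s ≫ r = 𝟙 V →
      U ∈ plusClosure S → V ∈ plusClosure S) :=
  stmt6_general S hiso hext hshift hsum
end

section
/- Let C be a full subcategory of a triangulated category that is coresolving (closed under extensions and under [1]) and closed under direct summands. Then the subcategory ⟨C⟩_- := { X | X ≅ C[n] for some C ∈ C and some integer n ≤ 0 } is a triangulated subcategory closed under direct summands. -/
/-!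
An object lies in `⟨S⟩₋` exactly when some nonnegative shift of it lies in `S`. Since `S` is
closed under `⟦1⟧`, the set of such shifts is upward closed, so any two objects of `⟨S⟩₋` are
moved into `S` by one common shift. Shifting preserves distinguished triangles and retracts,
so extension closure and closure under summands transfer from `S` to `⟨S⟩₋`.
-/

open CategoryTheory Limits Pretriangulated

universe v u

variable {C : Type u} [Category.{v} C] [Preadditive C] [HasZeroObject C]
  [HasShift C ℤ] [∀ n : ℤ, (shiftFunctor C n).Additive] [Pretriangulated C]

/-- `⟨S⟩₋`: objects isomorphic to `Y⟦n⟧` for some `Y ∈ S` and some integer `n ≤ 0`. -/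
def minusClosure (S : Set C) : Set C :=
  {X : C | ∃ Y ∈ S, ∃ n : ℤ, n ≤ 0 ∧ Nonempty (X ≅ Y⟦n⟧)}

section

variable {D : Type*} [Category D] [HasShift D ℤ] {S : Set D}

lemma shift_mem_of_nonneg (hiso : ∀ (X Y : D), (X ≅ Y) → X ∈ S → Y ∈ S)
    (hshift : ∀ X : D, X ∈ S → X⟦(1 : ℤ)⟧ ∈ S) {X : D} (hX : X ∈ S) {n : ℤ} (hn : 0 ≤ n) :
    X⟦n⟧ ∈ S := by
  induction n, hn using Int.leInduction with
  | base => exact hiso X _ ((shiftFunctorZero D ℤ).symm.app X) hX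
  | succ n _ ih => exact hiso _ _ ((shiftFunctorAdd D n 1).symm.app X) (hshift _ ih)

lemma shift_shift_mem_iff (hiso : ∀ (X Y : D), (X ≅ Y) → X ∈ S → Y ∈ S) (X : D) (a b : ℤ) :
    X⟦a⟧⟦b⟧ ∈ S ↔ X⟦a + b⟧ ∈ S :=
  ⟨hiso _ _ ((shiftFunctorAdd D a b).symm.app X), hiso _ _ ((shiftFunctorAdd D a b).app X)⟩

lemma shift_mem_of_le (hiso : ∀ (X Y : D), (X ≅ Y) → X ∈ S → Y ∈ S)
    (hshift : ∀ X : D, X ∈ S → X⟦(1 : ℤ)⟧ ∈ S) {X : D} {m n : ℤ} (hX : X⟦m⟧ ∈ S) (h : m ≤ n) :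
    X⟦n⟧ ∈ S := by
  have := shift_mem_of_nonneg hiso hshift hX (sub_nonneg.mpr h)
  rwa [shift_shift_mem_iff hiso, add_sub_cancel] at this

namespace minusClosure

lemma mem_iff (hiso : ∀ (X Y : D), (X ≅ Y) → X ∈ S → Y ∈ S) (X : D) :
    X ∈ minusClosure S ↔ ∃ n : ℤ, 0 ≤ n ∧ X⟦n⟧ ∈ S := by
  constructor
  · rintro ⟨Y, hY, n, hn, ⟨e⟩⟩
    exact ⟨-n, by omega, hiso _ _
      ((shiftFunctorCompIsoId D n (-n) (add_neg_cancel n)).symm.app Y ≪≫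
        ((shiftFunctor D (-n)).mapIso e).symm) hY⟩
  · rintro ⟨n, hn, hX⟩
    exact ⟨X⟦n⟧, hX, -n, by omega,
      ⟨(shiftFunctorCompIsoId D n (-n) (add_neg_cancel n)).symm.app X⟩⟩

lemma shift_mem (hiso : ∀ (X Y : D), (X ≅ Y) → X ∈ S → Y ∈ S)
    (hshift : ∀ X : D, X ∈ S → X⟦(1 : ℤ)⟧ ∈ S) {X : D} (hX : X ∈ minusClosure S) (a : ℤ) :
    X⟦a⟧ ∈ minusClosure S := by
  obtain ⟨n, hn, hXn⟩ := (mem_iff hiso X).mp hX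
  refine (mem_iff hiso _).mpr ⟨max 0 (n - a), le_max_left _ _, ?_⟩
  rw [shift_shift_mem_iff hiso]
  exact shift_mem_of_le hiso hshift hXn (by omega)

lemma retract_mem (hiso : ∀ (X Y : D), (X ≅ Y) → X ∈ S → Y ∈ S)
    (hsum : ∀ (U V : D) (r : U ⟶ V) (s : V ⟶ U), s ≫ r = 𝟙 V → U ∈ S → V ∈ S)
    {U V : D} (h : Retract V U) (hU : U ∈ minusClosure S) : V ∈ minusClosure S := by
  obtain ⟨n, hn, hUn⟩ := (mem_iff hiso U).mp hU
  let h' := h.map (shiftFunctor D n)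
  exact (mem_iff hiso V).mpr ⟨n, hn, hsum _ _ h'.r h'.i h'.retract hUn⟩

end minusClosure

end

namespace minusClosure

lemma mem_of_distTriang {S : Set C} (hiso : ∀ (X Y : C), (X ≅ Y) → X ∈ S → Y ∈ S)
    (hext : ∀ T ∈ distTriang C, T.obj₁ ∈ S → T.obj₃ ∈ S → T.obj₂ ∈ S)
    (hshift : ∀ X : C, X ∈ S → X⟦(1 : ℤ)⟧ ∈ S) (T : Triangle C) (hT : T ∈ distTriang C)
    (h₁ : T.obj₁ ∈ minusClosure S) (h₃ : T.obj₃ ∈ minusClosure S) :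
    T.obj₂ ∈ minusClosure S := by
  obtain ⟨n₁, hn₁, h₁⟩ := (mem_iff hiso _).mp h₁
  obtain ⟨n₃, hn₃, h₃⟩ := (mem_iff hiso _).mp h₃
  refine (mem_iff hiso _).mpr ⟨max n₁ n₃, le_max_of_le_left hn₁, ?_⟩
  exact hext _ (Triangle.shift_distinguished T hT _)
    (shift_mem_of_le hiso hshift h₁ (le_max_left _ _))
    (shift_mem_of_le hiso hshift h₃ (le_max_right _ _))

end minusClosure

theorem stmt7_general (S : Set C)
    (hiso : ∀ (X Y : C), (X ≅ Y) → X ∈ S → Y ∈ S)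
    (hext : ∀ T ∈ distTriang C, T.obj₁ ∈ S → T.obj₃ ∈ S → T.obj₂ ∈ S)
    (hshift : ∀ X : C, X ∈ S → X⟦(1 : ℤ)⟧ ∈ S)
    (hsum : ∀ (U V : C) (r : U ⟶ V) (s : V ⟶ U), s ≫ r = 𝟙 V → U ∈ S → V ∈ S) :
    (∀ X ∈ minusClosure S, X⟦(1 : ℤ)⟧ ∈ minusClosure S) ∧
    (∀ X ∈ minusClosure S, X⟦(-1 : ℤ)⟧ ∈ minusClosure S) ∧
    (∀ T ∈ distTriang C,
      T.obj₁ ∈ minusClosure S → T.obj₃ ∈ minusClosure S → T.obj₂ ∈ minusClosure S) ∧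
    (∀ (U V : C) (r : U ⟶ V) (s : V ⟶ U), s ≫ r = 𝟙 V →
      U ∈ minusClosure S → V ∈ minusClosure S) :=
  ⟨fun _ hX => minusClosure.shift_mem hiso hshift hX 1,
    fun _ hX => minusClosure.shift_mem hiso hshift hX (-1),
    minusClosure.mem_of_distTriang hiso hext hshift,
    fun _ _ r s hrs => minusClosure.retract_mem hiso hsum ⟨s, r, hrs⟩⟩

/-- if `S` is coresolving (extension closed and closed under `⟦1⟧`),
contains the zero objects, is closed under isomorphisms and under direct summands,
then `⟨S⟩₋` is a triangulated subcategory closed under direct summands. -/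
theorem stmt7 (S : Set C)
    (hiso : ∀ (X Y : C), (X ≅ Y) → X ∈ S → Y ∈ S)
    (hzero : ∀ X : C, IsZero X → X ∈ S)
    (hext : ∀ T ∈ distTriang C, T.obj₁ ∈ S → T.obj₃ ∈ S → T.obj₂ ∈ S)
    (hshift : ∀ X : C, X ∈ S → X⟦(1 : ℤ)⟧ ∈ S)
    (hsum : ∀ (U V : C) (r : U ⟶ V) (s : V ⟶ U), s ≫ r = 𝟙 V → U ∈ S → V ∈ S) :
    (∀ X ∈ minusClosure S, X⟦(1 : ℤ)⟧ ∈ minusClosure S) ∧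
    (∀ X ∈ minusClosure S, X⟦(-1 : ℤ)⟧ ∈ minusClosure S) ∧
    (∀ T ∈ distTriang C,
      T.obj₁ ∈ minusClosure S → T.obj₃ ∈ minusClosure S → T.obj₂ ∈ minusClosure S) ∧
    (∀ (U V : C) (r : U ⟶ V) (s : V ⟶ U), s ≫ r = 𝟙 V →
      U ∈ minusClosure S → V ∈ minusClosure S) :=
  stmt7_general S hiso hext hshift hsum
end

section
/- Let C be a resolving subcategory of a triangulated category D that is closed under direct summands, and let ⟨C⟩_+ = { X | X ≅ C[n], C ∈ C, n ≥ 0 }. Then ⟨C⟩_+ coincides with the class of objects L admitting a finite C-resolution, i.e., objects L for which there exist triangles L_{k+1} → X_k → L_k → with L_0 = L, L_{n+1} = 0, and all X_k ∈ C for some n ≥ 0. -/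
open CategoryTheory Limits Pretriangulated

universe v u

variable {C : Type u} [Category.{v} C] [Preadditive C] [HasZeroObject C]
  [HasShift C ℤ] [∀ n : ℤ, (shiftFunctor C n).Additive] [Pretriangulated C]

/-- `L` has a finite `S`-resolution: there are triangles `L_{k+1} → X_k → L_k → L_{k+1}⟦1⟧`
(`0 ≤ k ≤ n`) with `L_0 = L`, `L_{n+1} = 0` and all `X_k ∈ S`. -/
def hasFiniteRes (S : Set C) (L : C) : Prop :=
  ∃ (n : ℕ) (Ls : ℕ → C) (Xs : ℕ → C), Ls 0 = L ∧ IsZero (Ls (n + 1)) ∧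
    ∀ k ≤ n, Xs k ∈ S ∧
      ∃ (u : Ls (k + 1) ⟶ Xs k) (v : Xs k ⟶ Ls k) (w : Ls k ⟶ (Ls (k + 1))⟦(1 : ℤ)⟧),
        Triangle.mk u v w ∈ distTriang C

/-!
An object `Y⟦n⟧` with `Y ∈ S` is resolved by `Y` followed by `n` triangles `L → 0 → L⟦1⟧`.
Conversely, if `L_{k+1} ≅ Y⟦m⟧` with `Y ∈ S`, shifting the triangle `L_{k+1} → X_k → L_k` by
`-(m+1)` and rotating it exhibits `L_k⟦-(m+1)⟧` as an extension of `Y` by `X_k⟦-(m+1)⟧ ∈ S`,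
so `L_k ∈ ⟨S⟩₊`; descending induction from `L_{n+1} = 0` reaches `L_0 = L`.
-/

lemma subset_plusClosure {D : Type*} [Category D] [HasShift D ℤ] {S : Set D} :
    S ⊆ plusClosure S :=
  fun Y hY => ⟨Y, hY, 0, ⟨((shiftFunctorZero D ℤ).app Y).symm⟩⟩

lemma shift_neg_natCast_mem {D : Type*} [Category D] [HasShift D ℤ] {S : Set D}
    (hiso : ∀ (X Y : D), (X ≅ Y) → X ∈ S → Y ∈ S) (hshift : ∀ X : D, X ∈ S → X⟦(-1 : ℤ)⟧ ∈ S)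
    {X : D} (hX : X ∈ S) (k : ℕ) : X⟦(-(k : ℤ))⟧ ∈ S := by
  induction k with
  | zero => exact hiso X _ (((shiftFunctorZero D ℤ).app X).symm ≪≫ eqToIso (by simp)) hX
  | succ k ih =>
    exact hiso _ _ ((shiftFunctorAdd' D (-(k : ℤ)) (-1) _ (by push_cast; ring)).app X).symm
      (hshift _ ih)

section

open ZeroObject

variable {S : Set C}

lemma shift_mem_of_distTriang (hiso : ∀ (X Y : C), (X ≅ Y) → X ∈ S → Y ∈ S)
    (hext : ∀ T ∈ distTriang C, T.obj₁ ∈ S → T.obj₃ ∈ S → T.obj₂ ∈ S)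
    {A X B : C} {u : A ⟶ X} {v : X ⟶ B} {w : B ⟶ A⟦(1 : ℤ)⟧}
    (hT : Triangle.mk u v w ∈ distTriang C) (q : ℤ)
    (hX : X⟦q⟧ ∈ S) (hA : A⟦q + 1⟧ ∈ S) : B⟦q⟧ ∈ S :=
  hext _ (rot_of_distTriang _ (Triangle.shift_distinguished _ hT q)) hX
    (hiso _ _ ((shiftFunctorAdd' C q 1 (q + 1) rfl).app A) hA)

lemma mem_plusClosure_of_distTriang (hiso : ∀ (X Y : C), (X ≅ Y) → X ∈ S → Y ∈ S)
    (hext : ∀ T ∈ distTriang C, T.obj₁ ∈ S → T.obj₃ ∈ S → T.obj₂ ∈ S)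
    (hshift : ∀ X : C, X ∈ S → X⟦(-1 : ℤ)⟧ ∈ S)
    {A X B : C} {u : A ⟶ X} {v : X ⟶ B} {w : B ⟶ A⟦(1 : ℤ)⟧}
    (hT : Triangle.mk u v w ∈ distTriang C) (hX : X ∈ S) (hA : A ∈ plusClosure S) :
    B ∈ plusClosure S := by
  obtain ⟨Y, hY, m, ⟨e⟩⟩ := hA
  have hA' : A⟦-((m + 1 : ℕ) : ℤ) + 1⟧ ∈ S :=
    hiso Y _ ((shiftShiftNeg Y (m : ℤ)).symm ≪≫ (shiftFunctor C _).mapIso e.symm ≪≫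
      eqToIso (by push_cast; ring_nf)) hY
  exact ⟨_, shift_mem_of_distTriang hiso hext hT _ (shift_neg_natCast_mem hiso hshift hX _) hA',
    m + 1, ⟨(shiftNegShift B _).symm⟩⟩

lemma distinguished_mk_of_iso_obj₃ {A X B B' : C} {u : A ⟶ X} {v : X ⟶ B}
    {w : B ⟶ A⟦(1 : ℤ)⟧} (hT : Triangle.mk u v w ∈ distTriang C) (e : B ≅ B') :
    Triangle.mk u (v ≫ e.hom) (e.inv ≫ w) ∈ distTriang C :=
  -- `show` replaces the projections `(Triangle.mk _ _ _).objᵢ` in the types of the morphisms by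
  -- `A` and `X`; `simp` cannot rewrite inside those types
  isomorphic_distinguished _ hT _ (Triangle.isoMk _ _ (Iso.refl A) (Iso.refl X) e.symm
    (show u ≫ 𝟙 X = 𝟙 A ≫ u by simp) (show (v ≫ e.hom) ≫ e.inv = 𝟙 X ≫ v by simp)
    (show (e.inv ≫ w) ≫ (𝟙 A)⟦(1 : ℤ)⟧' = e.inv ≫ w by simp))

lemma hasFiniteRes_of_iso {L L' : C} (e : L ≅ L') (hL : hasFiniteRes S L) :
    hasFiniteRes S L' := by
  obtain ⟨n, Ls, Xs, rfl, hLz, hres⟩ := hL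
  refine ⟨n, fun | 0 => L' | k + 1 => Ls (k + 1), Xs, rfl, hLz, fun k hk => ?_⟩
  obtain ⟨hXk, u, v, w, hT⟩ := hres k hk
  cases k with
  | zero => exact ⟨hXk, u, v ≫ e.hom, e.inv ≫ w, distinguished_mk_of_iso_obj₃ hT e⟩
  | succ k => exact ⟨hXk, u, v, w, hT⟩

lemma hasFiniteRes_of_mem {L : C} (hL : L ∈ S) : hasFiniteRes S L := by
  refine ⟨0, fun | 0 => L | _ + 1 => 0, fun _ => L, rfl, isZero_zero C, fun k hk => ?_⟩
  obtain rfl : k = 0 := Nat.le_zero.mp hk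
  exact ⟨hL, 0, 𝟙 L, 0, contractible_distinguished₁ L⟩

lemma hasFiniteRes_shift_one (hzero : ∀ X : C, IsZero X → X ∈ S) {L : C}
    (hL : hasFiniteRes S L) : hasFiniteRes S (L⟦(1 : ℤ)⟧) := by
  obtain ⟨n, Ls, Xs, rfl, hLz, hres⟩ := hL
  refine ⟨n + 1, fun | 0 => (Ls 0)⟦(1 : ℤ)⟧ | k + 1 => Ls k,
    fun | 0 => 0 | k + 1 => Xs k, rfl, hLz, fun k hk => ?_⟩
  cases k with
  | zero =>
    exact ⟨hzero 0 (isZero_zero C), 0, 0, 𝟙 _, contractible_distinguished₂ (Ls 0)⟩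
  | succ k => exact hres k (by omega)

lemma hasFiniteRes_shift_natCast (hzero : ∀ X : C, IsZero X → X ∈ S) {Y : C} (hY : Y ∈ S)
    (n : ℕ) : hasFiniteRes S (Y⟦(n : ℤ)⟧) := by
  induction n with
  | zero =>
    exact hasFiniteRes_of_iso ((shiftFunctorZero C ℤ).app Y).symm (hasFiniteRes_of_mem hY)
  | succ n ih =>
    exact hasFiniteRes_of_iso ((shiftFunctorAdd' C (n : ℤ) 1 _ (by push_cast; ring)).app Y).symm
      (hasFiniteRes_shift_one hzero ih)

lemma hasFiniteRes_of_mem_plusClosure (hzero : ∀ X : C, IsZero X → X ∈ S) {L : C}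
    (hL : L ∈ plusClosure S) : hasFiniteRes S L :=
  let ⟨_, hY, n, ⟨e⟩⟩ := hL
  hasFiniteRes_of_iso e.symm (hasFiniteRes_shift_natCast hzero hY n)

lemma mem_plusClosure_of_hasFiniteRes (hiso : ∀ (X Y : C), (X ≅ Y) → X ∈ S → Y ∈ S)
    (hzero : ∀ X : C, IsZero X → X ∈ S)
    (hext : ∀ T ∈ distTriang C, T.obj₁ ∈ S → T.obj₃ ∈ S → T.obj₂ ∈ S)
    (hshift : ∀ X : C, X ∈ S → X⟦(-1 : ℤ)⟧ ∈ S) {L : C} (hL : hasFiniteRes S L) :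
    L ∈ plusClosure S := by
  obtain ⟨n, Ls, Xs, rfl, hLz, hres⟩ := hL
  refine Nat.decreasingInduction (motive := fun k _ => Ls k ∈ plusClosure S) (fun k hk ih => ?_)
    (subset_plusClosure (hzero _ hLz)) (Nat.zero_le (n + 1))
  obtain ⟨hXk, u, v, w, hT⟩ := hres k (Nat.lt_succ_iff.mp hk)
  exact mem_plusClosure_of_distTriang hiso hext hshift hT hXk ih

end

theorem stmt8_general (S : Set C)
    (hiso : ∀ (X Y : C), (X ≅ Y) → X ∈ S → Y ∈ S)
    (hzero : ∀ X : C, IsZero X → X ∈ S)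
    (hext : ∀ T ∈ distTriang C, T.obj₁ ∈ S → T.obj₃ ∈ S → T.obj₂ ∈ S)
    (hshift : ∀ X : C, X ∈ S → X⟦(-1 : ℤ)⟧ ∈ S) :
    plusClosure S = {L : C | hasFiniteRes S L} :=
  Set.ext fun _ => ⟨hasFiniteRes_of_mem_plusClosure hzero,
    mem_plusClosure_of_hasFiniteRes hiso hzero hext hshift⟩

/-- if `S` is resolving (extension closed, closed under `⟦-1⟧`, containing the
zero objects, closed under isomorphisms) and closed under direct summands, then `⟨S⟩₊`
coincides with the class of objects admitting a finite `S`-resolution. -/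
theorem stmt8 (S : Set C)
    (hiso : ∀ (X Y : C), (X ≅ Y) → X ∈ S → Y ∈ S)
    (hzero : ∀ X : C, IsZero X → X ∈ S)
    (hext : ∀ T ∈ distTriang C, T.obj₁ ∈ S → T.obj₃ ∈ S → T.obj₂ ∈ S)
    (hshift : ∀ X : C, X ∈ S → X⟦(-1 : ℤ)⟧ ∈ S)
    (hsum : ∀ (U V : C) (r : U ⟶ V) (s : V ⟶ U), s ≫ r = 𝟙 V → U ∈ S → V ∈ S) :
    plusClosure S = {L : C | hasFiniteRes S L} :=
  stmt8_general S hiso hzero hext hshift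
end

section
/- Let M be a semi-selforthogonal object of a triangulated category D, and let X_M denote the class of X ∈ ^{⊥_{k>0}}M admitting triangles X_i → M_i → X_{i+1} → (i ≥ 0, X_0 = X) with M_i ∈ add(M) and all X_i ∈ ^{⊥_{k>0}}M. Suppose X ∈ ^{⊥_{k>0}}M and X[-n] ∈ X_M for some n ≥ 0. Then X ∈ X_M. Equivalently, ^{⊥_{k>0}}M ∩ ⟨X_M⟩_+ = X_M. -/
open CategoryTheory Limits Pretriangulated

universe v u

variable {C : Type u} [Category.{v} C] [Preadditive C] [HasZeroObject C]
  [HasShift C ℤ] [∀ n : ℤ, (shiftFunctor C n).Additive] [Pretriangulated C]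
  [HasFiniteBiproducts C]

/-- `^{⊥_{k>0}}M`. -/
def leftPerp (M : C) : Set C :=
  {N : C | ∀ k : ℤ, 0 < k → ∀ f : N ⟶ M⟦k⟧, f = 0}

/-- The co-Auslander class `X_M`: objects `X ∈ ^{⊥_{k>0}}M` admitting triangles
`X_i → M_i → X_{i+1} →` (`X_0 = X`) with `M_i ∈ add M` and all `X_i ∈ ^{⊥_{k>0}}M`. -/
def coAuslanderClass (M : C) : Set C :=
  {X : C | ∃ Xs : ℕ → C, Xs 0 = X ∧ ∀ i : ℕ, Xs i ∈ leftPerp M ∧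
    ∃ (Mi : C) (_ : inAdd M Mi) (u : Xs i ⟶ Mi) (v : Mi ⟶ Xs (i + 1))
      (w : Xs (i + 1) ⟶ (Xs i)⟦(1 : ℤ)⟧), Triangle.mk u v w ∈ distTriang C}

/-!
Induction on `n`, one shift at a time. Let `Y ∈ X_M` be such that every map from `Y` to an object
of `add M` vanishes (for `Y = X⟦-(n+1)⟧` this is `X ∈ ^{⊥_{k>0}}M`). Then the first triangle
`Y → M₀ → Y₁ →` of `Y` splits: `Y₁ ≅ M₀ ⊞ Y⟦1⟧`. In the second triangle `Y₁ → M₁ → Y₂ →`, the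
component `Y₂ → M₀⟦1⟧` of the connecting map vanishes because `Y₂ ∈ ^{⊥_{k>0}}M`. Completing the
other component `Y₂ → Y⟦1⟧⟦1⟧` to a triangle `Y⟦1⟧ → D → Y₂ →` gives triangle maps in both
directions whose composite is the identity on the outer terms, so by the five lemma `D` is a
retract of `M₁`, hence in `add M`. Prepending this triangle to the tail `Y₂ → M₂ → ⋯` shows
`Y⟦1⟧ ∈ X_M`.
-/

omit [HasZeroObject C] [∀ n : ℤ, (shiftFunctor C n).Additive] [Pretriangulated C]
  [HasFiniteBiproducts C] in
lemma mem_leftPerp_of_iso {M X Y : C} (e : X ≅ Y) (hY : Y ∈ leftPerp M) : X ∈ leftPerp M :=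
  fun k hk f => by simpa using hY k hk (e.inv ≫ f)

omit [HasZeroObject C] [Pretriangulated C] [HasFiniteBiproducts C] in
lemma eq_zero_of_shift_neg {X N : C} {m : ℤ} (h : ∀ g : X ⟶ N⟦m⟧, g = 0) (f : X⟦-m⟧ ⟶ N) :
    f = 0 := by
  apply (shiftFunctor C m).map_injective
  rw [Functor.map_zero, ← Preadditive.IsIso.comp_left_eq_zero (shiftNegShift X m).inv]
  exact h _

omit [HasZeroObject C] [Pretriangulated C] [HasFiniteBiproducts C] in
lemma shift_neg_mem_leftPerp {M X : C} (hX : X ∈ leftPerp M) {m : ℤ} (hm : 0 ≤ m) :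
    X⟦-m⟧ ∈ leftPerp M := fun k hk =>
  eq_zero_of_shift_neg fun g => by
    rw [← Preadditive.IsIso.comp_right_eq_zero
      (g := ((shiftFunctorAdd' C k m (k + m) rfl).app M).inv)]
    exact hX (k + m) (by omega) _

omit [HasZeroObject C] [HasShift C ℤ] [∀ n : ℤ, (shiftFunctor C n).Additive] [Pretriangulated C] in
lemma inAdd_of_retract {M D N : C} (h : Retract D N) (hN : inAdd M N) : inAdd M D := by
  obtain ⟨r, s, p, hsp⟩ := hN
  exact ⟨r, h.i ≫ s, p ≫ h.r, by simp [reassoc_of% hsp]⟩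

omit [HasZeroObject C] [Pretriangulated C] in
lemma hom_shift_eq_zero_of_inAdd {M X N : C} (hX : X ∈ leftPerp M) (hN : inAdd M N) {k : ℤ}
    (hk : 0 < k) (f : X ⟶ N⟦k⟧) : f = 0 := by
  obtain ⟨r, s, p, hsp⟩ := hN
  have hsum : (f ≫ s⟦k⟧') ≫ ((shiftFunctor C k).mapBiproduct _).hom = 0 :=
    biproduct.hom_ext _ _ fun j => by simpa using hX k hk _
  rw [Preadditive.IsIso.comp_right_eq_zero] at hsum
  calc f = (f ≫ s⟦k⟧') ≫ p⟦k⟧' := by simp [← Functor.map_comp, hsp]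
    _ = 0 := by rw [hsum, zero_comp]

omit [HasFiniteBiproducts C] in
lemma distinguished_mk_of_iso₁ {X X' Y Z : C} (e : X' ≅ X) {u : X ⟶ Y} {v : Y ⟶ Z}
    {w : Z ⟶ X⟦(1 : ℤ)⟧} (hT : Triangle.mk u v w ∈ distTriang C) :
    Triangle.mk (e.hom ≫ u) v (w ≫ e.inv⟦(1 : ℤ)⟧') ∈ distTriang C := by
  have comm₃ : (w ≫ e.inv⟦(1 : ℤ)⟧') ≫ e.hom⟦(1 : ℤ)⟧' = 𝟙 Z ≫ w := by
    simp [← Functor.map_comp]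
  exact isomorphic_distinguished _ hT _ (Triangle.isoMk _ _ e (Iso.refl Y) (Iso.refl Z)
    (Category.comp_id _) ((Category.comp_id v).trans (Category.id_comp v).symm) comm₃)

omit [HasFiniteBiproducts C] in
lemma exists_retract_distinguished_of_iso_biprod {Z N W B A : C} {u : Z ⟶ N} {v : N ⟶ W}
    {w : W ⟶ Z⟦(1 : ℤ)⟧} (hT : Triangle.mk u v w ∈ distTriang C) (e : Z ≅ B ⊞ A)
    (hw : w ≫ (e.hom ≫ biprod.fst)⟦(1 : ℤ)⟧' = 0) :
    ∃ (D : C) (_ : Retract D N) (u' : A ⟶ D) (v' : D ⟶ W),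
      Triangle.mk u' v' (w ≫ (e.hom ≫ biprod.snd)⟦(1 : ℤ)⟧') ∈ distTriang C := by
  obtain ⟨D, u', v', hT'⟩ := distinguished_cocone_triangle₂ (w ≫ (e.hom ≫ biprod.snd)⟦(1 : ℤ)⟧')
  have hsplit : e.hom ≫ biprod.snd ≫ biprod.inr ≫ e.inv =
      𝟙 Z - e.hom ≫ biprod.fst ≫ biprod.inl ≫ e.inv := by
    rw [eq_sub_iff_add_eq, ← Preadditive.comp_add, ← Category.assoc biprod.snd,
      ← Category.assoc biprod.fst, ← Preadditive.add_comp, add_comm, biprod.total,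
      Category.id_comp, Iso.hom_inv_id]
  have hcomm : (w ≫ (e.hom ≫ biprod.snd)⟦(1 : ℤ)⟧') ≫ (biprod.inr ≫ e.inv)⟦(1 : ℤ)⟧' =
      𝟙 W ≫ w := by
    rw [Functor.map_comp] at hw
    rw [Category.assoc, ← Functor.map_comp, Category.assoc, hsplit]
    simp [reassoc_of% hw]
  obtain ⟨i, hi₁, hi₂⟩ :=
    complete_distinguished_triangle_morphism₂ _ _ hT' hT (biprod.inr ≫ e.inv) (𝟙 _) hcomm
  obtain ⟨r, hr₁, hr₂⟩ := complete_distinguished_triangle_morphism₂ _ _ hT hT'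
    (e.hom ≫ biprod.snd) (𝟙 _) (Category.id_comp _).symm
  let ι := Triangle.homMk _ _ _ i _ hi₁ hi₂ hcomm
  let ρ := Triangle.homMk _ _ _ r _ hr₁ hr₂ (Category.id_comp _).symm
  have h₁ : (ι ≫ ρ).hom₁ = 𝟙 _ := by
    change (biprod.inr ≫ e.inv) ≫ e.hom ≫ biprod.snd = 𝟙 A
    simp
  have h₃ : (ι ≫ ρ).hom₃ = 𝟙 _ := Category.id_comp _
  have : IsIso (ι ≫ ρ).hom₂ := isIso₂_of_isIso₁₃ (ι ≫ ρ) hT' hT'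
    (by rw [h₁]; infer_instance) (by rw [h₃]; infer_instance)
  exact ⟨D, ⟨i, r ≫ (asIso (ι ≫ ρ).hom₂).inv,
    (Category.assoc _ _ _).symm.trans (asIso (ι ≫ ρ).hom₂).hom_inv_id⟩, u', v', hT'⟩

lemma mem_leftPerp_of_mem_coAuslanderClass {M X : C} (hX : X ∈ coAuslanderClass M) :
    X ∈ leftPerp M := by
  obtain ⟨Xs, rfl, hXs⟩ := hX
  exact (hXs 0).1

lemma exists_distTriang_of_mem_coAuslanderClass {M X : C} (hX : X ∈ coAuslanderClass M) :
    ∃ (N Y : C) (_ : inAdd M N) (u : X ⟶ N) (v : N ⟶ Y) (w : Y ⟶ X⟦(1 : ℤ)⟧),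
      Triangle.mk u v w ∈ distTriang C ∧ Y ∈ coAuslanderClass M := by
  obtain ⟨Xs, rfl, hXs⟩ := hX
  obtain ⟨-, N, hN, u, v, w, hT⟩ := hXs 0
  exact ⟨N, Xs 1, hN, u, v, w, hT, fun i => Xs (i + 1), rfl, fun i => hXs (i + 1)⟩

lemma mem_coAuslanderClass_of_distTriang {M X N Y : C} (hX : X ∈ leftPerp M) (hN : inAdd M N)
    {u : X ⟶ N} {v : N ⟶ Y} {w : Y ⟶ X⟦(1 : ℤ)⟧} (hT : Triangle.mk u v w ∈ distTriang C)
    (hY : Y ∈ coAuslanderClass M) : X ∈ coAuslanderClass M := by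
  obtain ⟨Ys, rfl, hYs⟩ := hY
  exact ⟨fun | 0 => X | i + 1 => Ys i, rfl,
    fun | 0 => ⟨hX, N, hN, u, v, w, hT⟩ | i + 1 => hYs i⟩

lemma mem_coAuslanderClass_of_iso {M X Y : C} (e : X ≅ Y) (hY : Y ∈ coAuslanderClass M) :
    X ∈ coAuslanderClass M := by
  obtain ⟨N, Y', hN, u, v, w, hT, hY'⟩ := exists_distTriang_of_mem_coAuslanderClass hY
  exact mem_coAuslanderClass_of_distTriang
    (mem_leftPerp_of_iso e (mem_leftPerp_of_mem_coAuslanderClass hY)) hN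
    (distinguished_mk_of_iso₁ e hT) hY'

lemma shift_one_mem_coAuslanderClass {M Y : C} (hY : Y ∈ coAuslanderClass M)
    (hY₁ : Y⟦(1 : ℤ)⟧ ∈ leftPerp M) (hzero : ∀ N, inAdd M N → ∀ f : Y ⟶ N, f = 0) :
    Y⟦(1 : ℤ)⟧ ∈ coAuslanderClass M := by
  obtain ⟨M₀, Z₁, hM₀, u₀, v₀, w₀, hT₀, hZ₁⟩ := exists_distTriang_of_mem_coAuslanderClass hY
  obtain ⟨M₁, Z₂, hM₁, u₁, v₁, w₁, hT₁, hZ₂⟩ := exists_distTriang_of_mem_coAuslanderClass hZ₁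
  obtain rfl := hzero M₀ hM₀ u₀
  obtain ⟨e, -, -⟩ :=
    exists_iso_binaryBiproduct_of_distTriang _ (rot_of_distTriang _ hT₀)
      (neg_eq_zero.mpr (Functor.map_zero _ _ _))
  obtain ⟨D, hD, u, v, hT⟩ := exists_retract_distinguished_of_iso_biprod hT₁ e
    (hom_shift_eq_zero_of_inAdd (mem_leftPerp_of_mem_coAuslanderClass hZ₂) hM₀ one_pos _)
  exact mem_coAuslanderClass_of_distTriang hY₁ (inAdd_of_retract hD hM₁) hT hZ₂

lemma mem_coAuslanderClass_of_shift_neg {M X : C} (n : ℕ) (hX : X ∈ leftPerp M)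
    (h : X⟦-(n : ℤ)⟧ ∈ coAuslanderClass M) : X ∈ coAuslanderClass M := by
  induction n with
  | zero => exact mem_coAuslanderClass_of_iso ((shiftFunctorZero' C _ (by simp)).app X).symm h
  | succ n ih =>
    have e : X⟦-(n : ℤ)⟧ ≅ X⟦-((n + 1 : ℕ) : ℤ)⟧⟦(1 : ℤ)⟧ :=
      (shiftFunctorAdd' C _ 1 _ (by push_cast; ring)).app X
    refine ih (mem_coAuslanderClass_of_iso e (shift_one_mem_coAuslanderClass h ?_ ?_))
    · exact mem_leftPerp_of_iso e.symm (shift_neg_mem_leftPerp hX (by omega))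
    · exact fun N hN => eq_zero_of_shift_neg (hom_shift_eq_zero_of_inAdd hX hN (by omega))

theorem stmt9_general (M : C) :
    (∀ (X : C) (n : ℕ), X ∈ leftPerp M → X⟦(-(n : ℤ))⟧ ∈ coAuslanderClass M →
      X ∈ coAuslanderClass M) ∧
    leftPerp M ∩ plusClosure (coAuslanderClass M) = coAuslanderClass M := by
  refine ⟨fun X n => mem_coAuslanderClass_of_shift_neg n, Set.ext fun X => ⟨?_, ?_⟩⟩
  · rintro ⟨hX, Y, hY, n, ⟨e⟩⟩
    refine mem_coAuslanderClass_of_shift_neg n hX (mem_coAuslanderClass_of_iso ?_ hY)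
    exact (shiftFunctor C _).mapIso e ≪≫ (shiftFunctorCompIsoId C _ _ (by omega)).app Y
  · exact fun hX => ⟨mem_leftPerp_of_mem_coAuslanderClass hX, X, hX, 0,
      ⟨((shiftFunctorZero' C _ (by simp)).app X).symm⟩⟩

/-- for a semi-selforthogonal `M`, if `X ∈ ^{⊥_{k>0}}M` and
`X⟦-n⟧ ∈ X_M` for some `n ≥ 0`, then `X ∈ X_M`; equivalently
`^{⊥_{k>0}}M ∩ ⟨X_M⟩₊ = X_M`. -/
theorem stmt9 (M : C)
    (hM : ∀ k : ℤ, 0 < k → ∀ f : M ⟶ M⟦k⟧, f = 0) :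
    (∀ (X : C) (n : ℕ), X ∈ leftPerp M → X⟦(-(n : ℤ))⟧ ∈ coAuslanderClass M →
      X ∈ coAuslanderClass M) ∧
    leftPerp M ∩ plusClosure (coAuslanderClass M) = coAuslanderClass M :=
  stmt9_general M
end
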